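/- arXiv:2510.11895 — 5 statements merged into one kernel-verified Lean document; each statement's English description precedes it below -/
import Mathlib

section
/- Let θ ∈ [0,1] and let μ₁, μ₂ be the probability measures on {−1,1} with μ₁({1}) = (1+θ)/2 and μ₂({1}) = (1−θ)/2. Let n ≥ 1, ε₁,…,ε_n ∈ (0,1], and for each i let Cᵢ be an εᵢ-LDP Markov kernel from {−1,1} to a measurable space Yᵢ. Let P₁ = ⊗_{i=1}^n (Cᵢ)∗μ₁ and P₂ = ⊗_{i=1}^n (Cᵢ)∗μ₂, where (Cᵢ)∗μ denotes the law of Cᵢ(X) when X ∼ μ. Then min( KL(P₁ ‖ P₂), KL(P₂ ‖ P₁) ) ≤ 8 θ² Σ_{i=1}^n εᵢ². -/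
/-!
Each privatized coordinate law is a two-point mixture `a • Cᵢ 1 + b • Cᵢ (-1)` of measures that
dominate each other with factor `e^εᵢ`; exchanging the weights `a = (1+θ)/2`, `b = (1-θ)/2`
changes such a mixture by at most the factor `cᵢ = 1 + θ (e^εᵢ - 1)`, in both directions.
The likelihood ratio then lies in `[cᵢ⁻¹, cᵢ]`, and since `t log t + 1 - t ≤ (t - 1)²` the
divergence of the coordinate laws is at most `(cᵢ - 1)² ≤ 4 θ² εᵢ²`. Finally, the chain rule
makes the Kullback–Leibler divergence additive over product measures.
-/

open MeasureTheory ProbabilityTheory Real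
open scoped ENNReal BigOperators

open Classical in
/-- Kullback–Leibler divergence `KL(P‖Q)`: equal to `∫ log (dP/dQ) dP` when `P ≪ Q` and the
log-likelihood ratio is `P`-integrable, and `∞` otherwise. -/
noncomputable def klDiv {α : Type*} [MeasurableSpace α] (P Q : Measure α) : ℝ≥0∞ :=
  if P ≪ Q ∧ Integrable (fun x => Real.log (P.rnDeriv Q x).toReal) P then
    ENNReal.ofReal (∫ x, Real.log (P.rnDeriv Q x).toReal ∂P)
  else ⊤

/-- A kernel `C` is `ε`-LDP on a set `s` of inputs if
`C x W ≤ e^ε · C x' W` for all `x, x' ∈ s` and measurable `W`. -/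
def IsLDPOn {α β : Type*} [MeasurableSpace α] [MeasurableSpace β]
    (C : ProbabilityTheory.Kernel α β) (ε : ℝ) (s : Set α) : Prop :=
  ∀ x ∈ s, ∀ x' ∈ s, ∀ W : Set β, MeasurableSet W →
    C x W ≤ ENNReal.ofReal (Real.exp ε) * C x' W

lemma mul_add_mul_le_of_le_mul {a b E x y : ℝ} (hb : 0 ≤ b) (hba : b ≤ a) (hab : a + b = 1)
    (hE : 1 ≤ E) (hx : 0 ≤ x) (hy : 0 ≤ y) (hxy : x ≤ E * y) :
    a * x + b * y ≤ (1 + (a - b) * (E - 1)) * (b * x + a * y) := by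
  -- `x - y ≤ (E - 1) * min x y` and the convex combination `b * x + a * y` is at least `min x y`
  have key : x - y ≤ (E - 1) * (b * x + a * y) := by
    rcases le_total y x with h | h
    · nlinarith [mul_nonneg (sub_nonneg.2 hE) (mul_nonneg hb (sub_nonneg.2 h))]
    · nlinarith [mul_nonneg (sub_nonneg.2 hE)
        (add_nonneg (mul_nonneg hb hx) (mul_nonneg (hb.trans hba) hy))]
  nlinarith [mul_le_mul_of_nonneg_left key (sub_nonneg.2 hba)]

lemma sq_sub_one_le_sq_sub_one {c t : ℝ} (hc : 0 < c) (h₁ : c⁻¹ ≤ t) (h₂ : t ≤ c) :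
    (t - 1) ^ 2 ≤ (c - 1) ^ 2 := by
  have hct : 1 ≤ c * t := by rwa [inv_le_iff_one_le_mul₀' hc] at h₁
  have : 0 ≤ c * (c + t - 2) := by nlinarith [sq_nonneg (c - 1)]
  nlinarith [mul_nonneg (sub_nonneg.2 h₂) this]

lemma sq_exp_sub_one_le {ε : ℝ} (hε : |ε| ≤ 1) : (exp ε - 1) ^ 2 ≤ 4 * ε ^ 2 := by
  have h := pow_le_pow_left₀ (abs_nonneg _) (Real.abs_exp_sub_one_le hε) 2
  rw [sq_abs, mul_pow, sq_abs] at h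
  exact h.trans_eq (by norm_num)

namespace MeasureTheory.Measure

variable {α β : Type*} [MeasurableSpace α] [MeasurableSpace β] {μ ν : Measure α}

lemma rnDeriv_le_of_le_smul [SigmaFinite ν] {c : ℝ≥0∞} (h : μ ≤ c • ν) :
    μ.rnDeriv ν ≤ᵐ[ν] fun _ => c := by
  refine ae_le_of_forall_setLIntegral_le_of_sigmaFinite (μ.measurable_rnDeriv ν) fun s _ _ => ?_
  simpa [mul_comm] using (setLIntegral_rnDeriv_le s).trans (h s)

lemma inv_le_rnDeriv_of_le_smul [SigmaFinite μ] [SigmaFinite ν] (hμν : μ ≪ ν) {c : ℝ≥0∞}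
    (hc : c ≠ 0) (hc' : c ≠ ∞) (h : ν ≤ c • μ) :
    (fun _ => c⁻¹) ≤ᵐ[ν] μ.rnDeriv ν := by
  refine ae_le_of_forall_setLIntegral_le_of_sigmaFinite measurable_const fun s hs _ => ?_
  rw [setLIntegral_rnDeriv hμν s, setLIntegral_const, ENNReal.inv_mul_le_iff hc hc']
  exact h s

lemma smul_add_smul_le_smul [IsFiniteMeasure μ] [IsFiniteMeasure ν]
    {a b E : ℝ} (hb : 0 ≤ b) (hba : b ≤ a) (hab : a + b = 1) (hE : 1 ≤ E)
    (h : μ ≤ ENNReal.ofReal E • ν) :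
    ENNReal.ofReal a • μ + ENNReal.ofReal b • ν ≤
      ENNReal.ofReal (1 + (a - b) * (E - 1)) • (ENNReal.ofReal b • μ + ENNReal.ofReal a • ν) := by
  have ha : 0 ≤ a := hb.trans hba
  have hE₀ : 0 ≤ E := zero_le_one.trans hE
  have hc : 0 ≤ 1 + (a - b) * (E - 1) := by nlinarith
  refine Measure.le_iff.2 fun s _ => ?_
  have hs := h s
  simp only [Measure.add_apply, Measure.smul_apply, smul_eq_mul] at hs ⊢
  rw [← ofReal_measureReal (μ := μ) (s := s), ← ofReal_measureReal (μ := ν) (s := s)] at hs ⊢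
  rw [← ENNReal.ofReal_mul hE₀, ENNReal.ofReal_le_ofReal_iff (by positivity)] at hs
  rw [← ENNReal.ofReal_mul ha, ← ENNReal.ofReal_mul ha, ← ENNReal.ofReal_mul hb,
    ← ENNReal.ofReal_mul hb, ← ENNReal.ofReal_add (by positivity) (by positivity),
    ← ENNReal.ofReal_add (by positivity) (by positivity), ← ENNReal.ofReal_mul hc]
  exact ENNReal.ofReal_le_ofReal
    (mul_add_mul_le_of_le_mul hb hba hab hE measureReal_nonneg measureReal_nonneg hs)

lemma isProbabilityMeasure_ofReal_smul_add_smul (μ ν : Measure α) [IsProbabilityMeasure μ]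
    [IsProbabilityMeasure ν] {a b : ℝ} (ha : 0 ≤ a) (hb : 0 ≤ b) (hab : a + b = 1) :
    IsProbabilityMeasure (ENNReal.ofReal a • μ + ENNReal.ofReal b • ν) :=
  ⟨by simp [← ENNReal.ofReal_add ha hb, hab]⟩

lemma bind_smul_dirac_add_smul_dirac (κ : Kernel α β) (a b : ℝ≥0∞) (x y : α) :
    (a • dirac x + b • dirac y).bind κ = a • κ x + b • κ y := by
  ext s hs
  simp [Measure.bind_apply hs κ.aemeasurable, lintegral_dirac' _ (κ.measurable_coe hs)]

end MeasureTheory.Measure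

namespace InformationTheory

variable {α β : Type*} [MeasurableSpace α] [MeasurableSpace β]

lemma klFun_le_sq_sub_one {t : ℝ} (ht : 0 ≤ t) : klFun t ≤ (t - 1) ^ 2 := by
  rcases ht.eq_or_lt with rfl | ht
  · simp [klFun_zero]
  have := mul_le_mul_of_nonneg_left (Real.log_le_sub_one_of_pos ht) ht.le
  rw [klFun_apply]
  nlinarith

lemma klDiv_le_of_le_smul {μ ν : Measure α} [IsFiniteMeasure μ] [IsProbabilityMeasure ν]
    {c : ℝ} (hc : 0 < c) (hμν : μ ≤ ENNReal.ofReal c • ν) (hνμ : ν ≤ ENNReal.ofReal c • μ) :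
    klDiv μ ν ≤ ENNReal.ofReal ((c - 1) ^ 2) := by
  have hc₀ : ENNReal.ofReal c ≠ 0 := by simpa using hc
  have h_ac : μ ≪ ν := Measure.absolutelyContinuous_of_le_smul hμν
  rw [klDiv_eq_lintegral_klFun_of_ac h_ac]
  calc ∫⁻ x, ENNReal.ofReal (klFun (μ.rnDeriv ν x).toReal) ∂ν
      ≤ ∫⁻ _, ENNReal.ofReal ((c - 1) ^ 2) ∂ν := by
        refine lintegral_mono_ae ?_
        filter_upwards [Measure.rnDeriv_le_of_le_smul hμν,
          Measure.inv_le_rnDeriv_of_le_smul h_ac hc₀ ENNReal.ofReal_ne_top hνμ] with x hle hge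
        have hne : μ.rnDeriv ν x ≠ ∞ := ne_top_of_le_ne_top ENNReal.ofReal_ne_top hle
        refine ENNReal.ofReal_le_ofReal ((klFun_le_sq_sub_one ENNReal.toReal_nonneg).trans
          (sq_sub_one_le_sq_sub_one hc ?_ (ENNReal.toReal_le_of_le_ofReal hc.le hle)))
        simpa [ENNReal.toReal_inv, hc.le] using ENNReal.toReal_mono hne hge
    _ = ENNReal.ofReal ((c - 1) ^ 2) := by simp

lemma klDiv_smul_add_smul_le (μ ν : Measure α) [IsProbabilityMeasure μ] [IsProbabilityMeasure ν]
    {θ E : ℝ} (hθ : θ ∈ Set.Icc (0 : ℝ) 1) (hE : 1 ≤ E)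
    (hμν : μ ≤ ENNReal.ofReal E • ν) (hνμ : ν ≤ ENNReal.ofReal E • μ) :
    klDiv (ENNReal.ofReal ((1 + θ) / 2) • μ + ENNReal.ofReal ((1 - θ) / 2) • ν)
      (ENNReal.ofReal ((1 - θ) / 2) • μ + ENNReal.ofReal ((1 + θ) / 2) • ν)
      ≤ ENNReal.ofReal ((θ * (E - 1)) ^ 2) := by
  obtain ⟨hθ₀, hθ₁⟩ := hθ
  have hb : 0 ≤ (1 - θ) / 2 := by linarith
  have hba : (1 - θ) / 2 ≤ (1 + θ) / 2 := by linarith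
  have hab : (1 + θ) / 2 + (1 - θ) / 2 = 1 := by ring
  have hd : (1 + θ) / 2 - (1 - θ) / 2 = θ := by ring
  have := Measure.isProbabilityMeasure_ofReal_smul_add_smul μ ν (hb.trans hba) hb hab
  have := Measure.isProbabilityMeasure_ofReal_smul_add_smul μ ν hb (hb.trans hba)
    ((add_comm _ _).trans hab)
  have h₁ := Measure.smul_add_smul_le_smul hb hba hab hE hμν
  have h₂ := Measure.smul_add_smul_le_smul hb hba hab hE hνμ
  rw [hd] at h₁ h₂
  rw [add_comm (_ • ν), add_comm (_ • ν)] at h₂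
  simpa using klDiv_le_of_le_smul (by nlinarith) h₁ h₂

lemma klDiv_map_measurableEquiv (μ ν : Measure α) [IsFiniteMeasure μ] [IsFiniteMeasure ν]
    (e : α ≃ᵐ β) : klDiv (μ.map e) (ν.map e) = klDiv μ ν := by
  refine le_antisymm (klDiv_map_le μ ν e.measurable) ?_
  calc klDiv μ ν = klDiv ((μ.map e).map e.symm) ((ν.map e).map e.symm) := by
        simp only [MeasurableEquiv.map_symm_map]
    _ ≤ klDiv (μ.map e) (ν.map e) := klDiv_map_le _ _ e.symm.measurable

lemma klDiv_prod (μ₁ μ₂ : Measure α) (ν₁ ν₂ : Measure β) [IsProbabilityMeasure μ₁]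
    [IsFiniteMeasure μ₂] [IsProbabilityMeasure ν₁] [IsProbabilityMeasure ν₂] :
    klDiv (μ₁.prod ν₁) (μ₂.prod ν₂) = klDiv μ₁ μ₂ + klDiv ν₁ ν₂ := by
  have h_swap : klDiv (μ₁.prod ν₁) (μ₁.prod ν₂) = klDiv ν₁ ν₂ := by
    rw [← klDiv_map_measurableEquiv _ _ MeasurableEquiv.prodComm,
      show ⇑(MeasurableEquiv.prodComm : α × β ≃ᵐ β × α) = Prod.swap from rfl,
      Measure.prod_swap, Measure.prod_swap, ← Measure.compProd_const, ← Measure.compProd_const,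
      klDiv_compProd_left]
  rw [← Measure.compProd_const, ← Measure.compProd_const, klDiv_compProd_eq_add,
    Measure.compProd_const, Measure.compProd_const, h_swap]

lemma klDiv_pi_fin : ∀ {n : ℕ} {α : Fin n → Type*} [∀ i, MeasurableSpace (α i)]
    (μ ν : ∀ i, Measure (α i)) [∀ i, IsProbabilityMeasure (μ i)]
    [∀ i, IsProbabilityMeasure (ν i)],
    klDiv (Measure.pi μ) (Measure.pi ν) = ∑ i, klDiv (μ i) (ν i)
  | 0, _, _, μ, ν, _, _ => by
    rw [Measure.pi_of_empty μ, Measure.pi_of_empty ν, klDiv_self, Finset.univ_eq_empty,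
      Finset.sum_empty]
  | n + 1, α, _, μ, ν, _, _ => by
    rw [← klDiv_map_measurableEquiv _ _ (MeasurableEquiv.piFinSuccAbove α 0),
      (measurePreserving_piFinSuccAbove μ 0).map_eq,
      (measurePreserving_piFinSuccAbove ν 0).map_eq, klDiv_prod, klDiv_pi_fin,
      Fin.sum_univ_succ]
    rfl

lemma klDiv_pi {ι : Type*} [Fintype ι] {α : ι → Type*} [∀ i, MeasurableSpace (α i)]
    (μ ν : ∀ i, Measure (α i)) [∀ i, IsProbabilityMeasure (μ i)]
    [∀ i, IsProbabilityMeasure (ν i)] :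
    klDiv (Measure.pi μ) (Measure.pi ν) = ∑ i, klDiv (μ i) (ν i) := by
  let e := (Fintype.equivFin ι).symm
  rw [← (measurePreserving_piCongrLeft μ e).map_eq, ← (measurePreserving_piCongrLeft ν e).map_eq,
    klDiv_map_measurableEquiv, klDiv_pi_fin, e.sum_comp (fun i => klDiv (μ i) (ν i))]

end InformationTheory

-- Mathlib's `klDiv` carries the correction term `ν.real univ - μ.real univ`.
lemma klDiv_eq_informationTheory_klDiv {α : Type*} [MeasurableSpace α] {μ ν : Measure α}
    (h : μ Set.univ = ν Set.univ) : klDiv μ ν = InformationTheory.klDiv μ ν := by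
  rw [klDiv, InformationTheory.klDiv_def, measureReal_def, measureReal_def, h, add_sub_cancel_right]
  rfl

lemma IsLDPOn.le_smul {α β : Type*} [MeasurableSpace α] [MeasurableSpace β] {C : Kernel α β}
    {ε : ℝ} {s : Set α} (h : IsLDPOn C ε s) {x x' : α} (hx : x ∈ s) (hx' : x' ∈ s) :
    C x ≤ ENNReal.ofReal (exp ε) • C x' :=
  Measure.le_iff.2 fun W hW => h x hx x' hx' W hW

theorem stmt5_general (θ : ℝ) (hθ : θ ∈ Set.Icc (0 : ℝ) 1)
    (n : ℕ) (ε : Fin n → ℝ) (hε : ∀ i, ε i ∈ Set.Ioc (0 : ℝ) 1)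
    (Y : Fin n → Type) [mY : ∀ i, MeasurableSpace (Y i)]
    (C : ∀ i, ProbabilityTheory.Kernel ℝ (Y i)) [∀ i, IsMarkovKernel (C i)]
    (hLDP : ∀ i, IsLDPOn (C i) (ε i) ({-1, 1} : Set ℝ)) :
    min
      (klDiv
        (Measure.pi fun i =>
          Measure.bind
            (ENNReal.ofReal ((1 + θ) / 2) • Measure.dirac (1 : ℝ) +
              ENNReal.ofReal ((1 - θ) / 2) • Measure.dirac (-1 : ℝ)) (fun x => C i x))
        (Measure.pi fun i =>
          Measure.bind
            (ENNReal.ofReal ((1 - θ) / 2) • Measure.dirac (1 : ℝ) +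
              ENNReal.ofReal ((1 + θ) / 2) • Measure.dirac (-1 : ℝ)) (fun x => C i x)))
      (klDiv
        (Measure.pi fun i =>
          Measure.bind
            (ENNReal.ofReal ((1 - θ) / 2) • Measure.dirac (1 : ℝ) +
              ENNReal.ofReal ((1 + θ) / 2) • Measure.dirac (-1 : ℝ)) (fun x => C i x))
        (Measure.pi fun i =>
          Measure.bind
            (ENNReal.ofReal ((1 + θ) / 2) • Measure.dirac (1 : ℝ) +
              ENNReal.ofReal ((1 - θ) / 2) • Measure.dirac (-1 : ℝ)) (fun x => C i x)))
      ≤ ENNReal.ofReal (8 * θ ^ 2 * ∑ i, (ε i) ^ 2) := by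
  have ha : 0 ≤ (1 + θ) / 2 := by linarith [hθ.1]
  have hb : 0 ≤ (1 - θ) / 2 := by linarith [hθ.2]
  have (i : Fin n) := Measure.isProbabilityMeasure_ofReal_smul_add_smul (C i 1) (C i (-1)) ha hb
    (by ring)
  have (i : Fin n) := Measure.isProbabilityMeasure_ofReal_smul_add_smul (C i 1) (C i (-1)) hb ha
    (by ring)
  have h_one : (1 : ℝ) ∈ ({-1, 1} : Set ℝ) := by simp
  have h_neg_one : (-1 : ℝ) ∈ ({-1, 1} : Set ℝ) := by simp
  refine (min_le_left _ _).trans ?_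
  simp only [Measure.bind_smul_dirac_add_smul_dirac]
  rw [klDiv_eq_informationTheory_klDiv (by simp), InformationTheory.klDiv_pi]
  refine (Finset.sum_le_sum fun i _ => InformationTheory.klDiv_smul_add_smul_le _ _ hθ
    (one_le_exp (hε i).1.le) ((hLDP i).le_smul h_one h_neg_one)
    ((hLDP i).le_smul h_neg_one h_one)).trans ?_
  rw [Finset.mul_sum, ENNReal.ofReal_sum_of_nonneg fun i _ => by positivity]
  gcongr with i
  have hεi : |ε i| ≤ 1 := abs_le.2 ⟨by linarith [(hε i).1], (hε i).2⟩
  nlinarith [mul_le_mul_of_nonneg_left (sq_exp_sub_one_le hεi) (sq_nonneg θ)]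

/-- Let `μ₁, μ₂` be the distributions on `{−1,1}` with
`μ₁({1}) = (1+θ)/2` and `μ₂({1}) = (1−θ)/2`, and let `Cᵢ` be `εᵢ`-LDP Markov kernels on
`{−1,1}` with `εᵢ ∈ (0,1]`.  Then the product distributions `P₁ = ⊗ᵢ (Cᵢ)∗μ₁` and
`P₂ = ⊗ᵢ (Cᵢ)∗μ₂` satisfy `min (KL(P₁‖P₂), KL(P₂‖P₁)) ≤ 8 θ² ∑ᵢ εᵢ²`. -/
theorem stmt5 (θ : ℝ) (hθ : θ ∈ Set.Icc (0 : ℝ) 1)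
    (n : ℕ) (hn : 1 ≤ n) (ε : Fin n → ℝ) (hε : ∀ i, ε i ∈ Set.Ioc (0 : ℝ) 1)
    (Y : Fin n → Type) [mY : ∀ i, MeasurableSpace (Y i)]
    (C : ∀ i, ProbabilityTheory.Kernel ℝ (Y i)) [∀ i, IsMarkovKernel (C i)]
    (hLDP : ∀ i, IsLDPOn (C i) (ε i) ({-1, 1} : Set ℝ)) :
    min
      (klDiv
        (Measure.pi fun i =>
          Measure.bind
            (ENNReal.ofReal ((1 + θ) / 2) • Measure.dirac (1 : ℝ) +
              ENNReal.ofReal ((1 - θ) / 2) • Measure.dirac (-1 : ℝ)) (fun x => C i x))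
        (Measure.pi fun i =>
          Measure.bind
            (ENNReal.ofReal ((1 - θ) / 2) • Measure.dirac (1 : ℝ) +
              ENNReal.ofReal ((1 + θ) / 2) • Measure.dirac (-1 : ℝ)) (fun x => C i x)))
      (klDiv
        (Measure.pi fun i =>
          Measure.bind
            (ENNReal.ofReal ((1 - θ) / 2) • Measure.dirac (1 : ℝ) +
              ENNReal.ofReal ((1 + θ) / 2) • Measure.dirac (-1 : ℝ)) (fun x => C i x))
        (Measure.pi fun i =>
          Measure.bind
            (ENNReal.ofReal ((1 + θ) / 2) • Measure.dirac (1 : ℝ) +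
              ENNReal.ofReal ((1 - θ) / 2) • Measure.dirac (-1 : ℝ)) (fun x => C i x)))
      ≤ ENNReal.ofReal (8 * θ ^ 2 * ∑ i, (ε i) ^ 2) :=
  stmt5_general θ hθ n ε hε Y (mY := mY) C hLDP
end

section
/- Let d ≥ 2, B > 0, η > 0, and let u ∈ ℝ^d be a unit vector. Let R_u(y) = y − 2⟨y,u⟩u be the reflection across the hyperplane {⟨y,u⟩ = 0}. Let f : S^{d−1}(B) → ℝ be η-Lipschitz with respect to the Euclidean distance, and define g : S^{d−1}(B) → ℝ by g(y) = f(y) if ⟨y,u⟩ > 0 and g(y) = f(R_u(y)) if ⟨y,u⟩ ≤ 0. Then g is η-Lipschitz with respect to the Euclidean distance. -/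
open MeasureTheory Real
open scoped RealInnerProductSpace

open Classical in
/-- The function obtained from `f` on the hemisphere `{⟨y,u⟩ > 0}` by reflecting the other
hemisphere across the hyperplane `{⟨y,u⟩ = 0}`: `g(y) = f(y)` if `⟨y,u⟩ > 0` and
`g(y) = f(R_u(y))` with `R_u(y) = y − 2⟨y,u⟩u` otherwise. -/
noncomputable def reflectGlue {d : ℕ} (u : EuclideanSpace ℝ (Fin d))
    (f : EuclideanSpace ℝ (Fin d) → ℝ) (y : EuclideanSpace ℝ (Fin d)) : ℝ :=
  if 0 < ⟪y, u⟫ then f y else f (y - (2 * ⟪y, u⟫) • u)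

section aux

variable {E : Type*} [NormedAddCommGroup E] [InnerProductSpace ℝ E]

lemma refl_norm_sq (u y : E) (hu : ‖u‖ = 1) :
    ‖y - (2 * ⟪y, u⟫) • u‖ ^ 2 = ‖y‖ ^ 2 := by
  have huu : ⟪u, u⟫ = 1 := by
    rw [real_inner_self_eq_norm_sq, hu]; norm_num
  rw [← real_inner_self_eq_norm_sq, ← real_inner_self_eq_norm_sq]
  simp only [inner_sub_left, inner_sub_right, real_inner_smul_left, real_inner_smul_right, huu]
  have : ⟪u, y⟫ = ⟪y, u⟫ := real_inner_comm y u
  rw [this]; ring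

lemma refl_mem_sphere (u y : E) (hu : ‖u‖ = 1) {B : ℝ}
    (hy : y ∈ Metric.sphere (0 : E) B) :
    y - (2 * ⟪y, u⟫) • u ∈ Metric.sphere (0 : E) B := by
  simp only [Metric.mem_sphere, dist_zero_right] at hy ⊢
  have h := refl_norm_sq u y hu
  nlinarith [norm_nonneg (y - (2 * ⟪y, u⟫) • u), norm_nonneg y]

lemma cross_norm_sq (u y z : E) (hu : ‖u‖ = 1) :
    ‖y - (z - (2 * ⟪z, u⟫) • u)‖ ^ 2 = ‖y - z‖ ^ 2 + 4 * ⟪z, u⟫ * ⟪y, u⟫ := by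
  have huu : ⟪u, u⟫ = 1 := by
    rw [real_inner_self_eq_norm_sq, hu]; norm_num
  rw [← real_inner_self_eq_norm_sq, ← real_inner_self_eq_norm_sq]
  simp only [inner_sub_left, inner_sub_right, real_inner_smul_left, real_inner_smul_right, huu]
  have h1 : ⟪u, y⟫ = ⟪y, u⟫ := real_inner_comm y u
  have h2 : ⟪u, z⟫ = ⟪z, u⟫ := real_inner_comm z u
  have h3 : ⟪z, y⟫ = ⟪y, z⟫ := real_inner_comm y z
  rw [h1, h2, h3]; ring

lemma refl_sub_norm (u y z : E) (hu : ‖u‖ = 1) :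
    ‖(y - (2 * ⟪y, u⟫) • u) - (z - (2 * ⟪z, u⟫) • u)‖ = ‖y - z‖ := by
  have key : (y - (2 * ⟪y, u⟫) • u) - (z - (2 * ⟪z, u⟫) • u)
      = (y - z) - (2 * ⟪y - z, u⟫) • u := by
    rw [inner_sub_left]
    module
  rw [key]
  have h := refl_norm_sq u (y - z) hu
  nlinarith [norm_nonneg ((y - z) - (2 * ⟪y - z, u⟫) • u), norm_nonneg (y - z)]

lemma cross_norm_le (u y z : E) (hu : ‖u‖ = 1) (hy : 0 < ⟪y, u⟫) (hz : ⟪z, u⟫ ≤ 0) :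
    ‖y - (z - (2 * ⟪z, u⟫) • u)‖ ≤ ‖y - z‖ := by
  have h := cross_norm_sq u y z hu
  nlinarith [norm_nonneg (y - (z - (2 * ⟪z, u⟫) • u)), norm_nonneg (y - z),
    mul_nonpos_of_nonpos_of_nonneg hz hy.le]

end aux

/-- If `f` is `η`-Lipschitz on the sphere `S^{d−1}(B)`, then the glued
function `g` (equal to `f` on the open hemisphere `{⟨y,u⟩ > 0}` and to `f ∘ R_u` on its
complement) is also `η`-Lipschitz on the sphere. -/
theorem stmt8 (d : ℕ) (hd : 2 ≤ d) (B η : ℝ) (hB : 0 < B) (hη : 0 < η)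
    (u : EuclideanSpace ℝ (Fin d)) (hu : ‖u‖ = 1)
    (f : EuclideanSpace ℝ (Fin d) → ℝ)
    (hf : ∀ y ∈ Metric.sphere (0 : EuclideanSpace ℝ (Fin d)) B,
      ∀ z ∈ Metric.sphere (0 : EuclideanSpace ℝ (Fin d)) B,
        |f y - f z| ≤ η * ‖y - z‖) :
    ∀ y ∈ Metric.sphere (0 : EuclideanSpace ℝ (Fin d)) B,
      ∀ z ∈ Metric.sphere (0 : EuclideanSpace ℝ (Fin d)) B,
        |reflectGlue u f y - reflectGlue u f z| ≤ η * ‖y - z‖ := by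
  intro y hy z hz
  unfold reflectGlue
  by_cases hyu : 0 < ⟪y, u⟫ <;> by_cases hzu : 0 < ⟪z, u⟫ <;>
    simp only [hyu, hzu, if_true, if_false]
  · exact hf y hy z hz
  · calc |f y - f (z - (2 * ⟪z, u⟫) • u)|
        ≤ η * ‖y - (z - (2 * ⟪z, u⟫) • u)‖ :=
          hf y hy _ (refl_mem_sphere u z hu hz)
      _ ≤ η * ‖y - z‖ := by
          have := cross_norm_le u y z hu hyu (not_lt.mp hzu)
          nlinarith
  · rw [abs_sub_comm, ← norm_neg (y - z), neg_sub]
    calc |f z - f (y - (2 * ⟪y, u⟫) • u)|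
        ≤ η * ‖z - (y - (2 * ⟪y, u⟫) • u)‖ :=
          hf z hz _ (refl_mem_sphere u y hu hy)
      _ ≤ η * ‖z - y‖ := by
          have := cross_norm_le u z y hu hzu (not_lt.mp hyu)
          nlinarith
  · calc |f (y - (2 * ⟪y, u⟫) • u) - f (z - (2 * ⟪z, u⟫) • u)|
        ≤ η * ‖(y - (2 * ⟪y, u⟫) • u) - (z - (2 * ⟪z, u⟫) • u)‖ :=
          hf _ (refl_mem_sphere u y hu hy) _ (refl_mem_sphere u z hu hz)
      _ = η * ‖y - z‖ := by rw [refl_sub_norm u y z hu]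
end

section
/- There exists a universal constant c > 0 such that for every d ≥ 2, B > 0, and unit vectors ℓ, u ∈ ℝ^d, if Y is distributed according to σ_B conditioned on the hemisphere S₁ = {y ∈ S^{d−1}(B) : ⟨y,u⟩ > 0}, then for all t ≥ 0, P( |⟨ℓ,Y⟩ − E⟨ℓ,Y⟩| ≥ t ) ≤ 4 exp(−c d t² / B²). -/
/-! Under `σ_B` the cap `{⟪ℓ, y⟫ ≥ s B}` is the radial image of the points `y` of the unit ball
with `⟪ℓ, y⟫ ≥ s ‖y‖`, and these lie in the ball of radius `√(1 - s²/2)` around `(s/√2) ℓ`;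
comparing volumes gives the tail bound `exp (-d s² / 4)`. The hemisphere has measure `1/2` by
symmetry, so conditioning on it at most doubles probabilities. By rotation invariance
`E ⟪ℓ, y⟫² = B² / d` under `σ_B`, so the conditional mean `m` satisfies `m² ≤ 2 B² / d`.
For `t ≥ 2 |m|` the deviation event lies in `{|⟪ℓ, Y⟫| ≥ t/2}`; for smaller `t` the bound
`4 exp (-d t² / (16 B²))` already exceeds `1`. -/

open MeasureTheory ProbabilityTheory Real
open scoped ENNReal RealInnerProductSpace

/-- The uniform (rotation-invariant) probability measure on the sphere of radius `B` in
`ℝ^d`, realized as the pushforward of normalized Lebesgue measure on the unit ball under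
the radial projection `y ↦ (B/‖y‖) y`. -/
noncomputable def sphereUniform (d : ℕ) (B : ℝ) : Measure (EuclideanSpace ℝ (Fin d)) :=
  Measure.map (fun y => (B / ‖y‖) • y)
    ((volume (Metric.ball (0 : EuclideanSpace ℝ (Fin d)) 1))⁻¹ •
      volume.restrict (Metric.ball (0 : EuclideanSpace ℝ (Fin d)) 1))

open Metric

section InnerProductSpace

variable {E : Type*} [NormedAddCommGroup E] [InnerProductSpace ℝ E]

lemma norm_sub_smul_sq_le_of_le_inner {l y : E} (hl : ‖l‖ = 1) {r s : ℝ} (hr : 0 ≤ r)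
    (hrs : r ≤ s) (hr2 : 2 * r ^ 2 ≤ 1) (hy : ‖y‖ ≤ 1) (hcap : s * ‖y‖ ≤ ⟪l, y⟫) :
    ‖y - r • l‖ ^ 2 ≤ 1 - r ^ 2 := by
  have hinner : r ^ 2 * ‖y‖ ≤ ⟪y, r • l⟫ := by
    rw [real_inner_smul_right, real_inner_comm]
    nlinarith [mul_le_mul_of_nonneg_left hcap hr,
      mul_nonneg (mul_nonneg hr (sub_nonneg.2 hrs)) (norm_nonneg y)]
  rw [norm_sub_sq_real, norm_smul, norm_eq_abs, abs_of_nonneg hr, hl, mul_one]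
  nlinarith [norm_nonneg y]

variable [MeasurableSpace E] [BorelSpace E] {μ : Measure E}

lemma memLp_inner_of_ae_norm_le [IsFiniteMeasure μ] {B : ℝ} (hB : ∀ᵐ z ∂μ, ‖z‖ ≤ B)
    (w : E) (p : ℝ≥0∞) : MemLp (fun z => ⟪w, z⟫) p μ := by
  refine .of_bound (continuous_const.inner continuous_id).aestronglyMeasurable (‖w‖ * B) ?_
  filter_upwards [hB] with z hz
  exact (abs_real_inner_le_norm w z).trans (by gcongr)

lemma measure_setOf_inner_pos_eq_half [IsProbabilityMeasure μ]
    (hμ : μ.map (LinearIsometryEquiv.neg ℝ : E ≃ₗᵢ[ℝ] E) = μ) {u : E}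
    (hu : μ {y | ⟪y, u⟫ = 0} = 0) : μ {y | 0 < ⟪y, u⟫} = 2⁻¹ := by
  have hpos : MeasurableSet {y : E | 0 < ⟪y, u⟫} :=
    measurableSet_lt measurable_const (continuous_id.inner continuous_const).measurable
  have hneg : μ {y | ⟪y, u⟫ < 0} = μ {y | 0 < ⟪y, u⟫} := by
    conv_rhs => rw [← hμ, Measure.map_apply (LinearIsometryEquiv.continuous _).measurable hpos]
    congr 1
    ext y
    simp [inner_neg_left]
  have hcompl : μ {y | 0 < ⟪y, u⟫}ᶜ = μ {y | ⟪y, u⟫ < 0} := by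
    refine le_antisymm ?_ (measure_mono fun y (hy : ⟪y, u⟫ < 0) => hy.not_gt)
    calc μ {y | 0 < ⟪y, u⟫}ᶜ ≤ μ ({y | ⟪y, u⟫ < 0} ∪ {y | ⟪y, u⟫ = 0}) :=
          measure_mono fun y (hy : ¬0 < ⟪y, u⟫) => (not_lt.1 hy).lt_or_eq
      _ ≤ μ {y | ⟪y, u⟫ < 0} + μ {y | ⟪y, u⟫ = 0} := measure_union_le _ _
      _ = μ {y | ⟪y, u⟫ < 0} := by rw [hu, add_zero]
  have htwo : μ {y | 0 < ⟪y, u⟫} * 2 = 1 :=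
    calc μ {y | 0 < ⟪y, u⟫} * 2 = μ {y | 0 < ⟪y, u⟫} + μ {y | ⟪y, u⟫ < 0} := by
          rw [hneg, mul_two]
      _ = 1 := by rw [← hcompl, measure_add_measure_compl hpos, measure_univ]
  exact ENNReal.eq_inv_of_mul_eq_one_left htwo

lemma integral_inner_sq_eq_of_norm_eq (hμ : ∀ e : E ≃ₗᵢ[ℝ] E, μ.map e = μ) {a b : E}
    (hab : ‖a‖ = ‖b‖) : ∫ z, ⟪a, z⟫ ^ 2 ∂μ = ∫ z, ⟪b, z⟫ ^ 2 ∂μ := by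
  set e := (ℝ ∙ (a - b))ᗮ.reflection
  calc ∫ z, ⟪a, z⟫ ^ 2 ∂μ = ∫ z, ⟪e a, e z⟫ ^ 2 ∂μ := by simp_rw [e.inner_map_map]
    _ = ∫ z, ⟪b, z⟫ ^ 2 ∂(μ.map e) := by
      rw [Submodule.reflection_sub hab, integral_map e.continuous.aemeasurable
        ((continuous_const.inner continuous_id).pow 2).aestronglyMeasurable]
    _ = ∫ z, ⟪b, z⟫ ^ 2 ∂μ := by rw [hμ]

lemma integral_inner_sq_eq_of_isometry_invariant [FiniteDimensional ℝ E] [IsProbabilityMeasure μ]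
    (hμ : ∀ e : E ≃ₗᵢ[ℝ] E, μ.map e = μ) {B : ℝ} (hB : ∀ᵐ z ∂μ, ‖z‖ = B) {l : E}
    (hl : ‖l‖ = 1) : ∫ z, ⟪l, z⟫ ^ 2 ∂μ = B ^ 2 / Module.finrank ℝ E := by
  set b := stdOrthonormalBasis ℝ E
  have hsum : ∑ i, ∫ z, ⟪b i, z⟫ ^ 2 ∂μ = B ^ 2 := by
    rw [← integral_finsetSum _ fun i _ =>
      (memLp_inner_of_ae_norm_le (hB.mono fun _ => le_of_eq) (b i) 2).integrable_sq]
    have hpointwise : ∀ᵐ z ∂μ, ∑ i, ⟪b i, z⟫ ^ 2 = B ^ 2 := by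
      filter_upwards [hB] with z hz
      rw [← hz, ← real_inner_self_eq_norm_sq, ← b.sum_inner_mul_inner]
      simp_rw [sq, real_inner_comm z]
    simp [integral_congr_ae hpointwise]
  have : Nontrivial E := ⟨⟨l, 0, ne_zero_of_norm_ne_zero (by simp [hl])⟩⟩
  have hdim : (0 : ℝ) < Module.finrank ℝ E := by exact_mod_cast Module.finrank_pos
  simp_rw [integral_inner_sq_eq_of_norm_eq hμ ((b.orthonormal.1 _).trans hl.symm),
    Finset.sum_const, Finset.card_univ, Fintype.card_fin, nsmul_eq_mul] at hsum
  rw [← hsum]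
  field_simp

end InnerProductSpace

lemma cond_le_inv_smul {Ω : Type*} [MeasurableSpace Ω] (μ : Measure Ω) (s : Set Ω) :
    μ[|s] ≤ (μ s)⁻¹ • μ := by
  rw [ProbabilityTheory.cond]
  gcongr
  exact Measure.restrict_le_self

section Sphere

variable {d : ℕ} {B : ℝ}

lemma measurable_radial (B : ℝ) :
    Measurable fun y : EuclideanSpace ℝ (Fin d) => (B / ‖y‖) • y :=
  (measurable_const.div measurable_norm).smul measurable_id

lemma sphereUniform_apply {A : Set (EuclideanSpace ℝ (Fin d))} (hA : MeasurableSet A) :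
    sphereUniform d B A = (volume (ball (0 : EuclideanSpace ℝ (Fin d)) 1))⁻¹ *
      volume (ball 0 1 ∩ (fun y => (B / ‖y‖) • y) ⁻¹' A) := by
  rw [sphereUniform, Measure.map_apply (measurable_radial B) hA, Measure.smul_apply,
    Measure.restrict_apply' measurableSet_ball, smul_eq_mul, Set.inter_comm]

lemma inv_volume_ball_mul_self [NeZero d] :
    (volume (ball (0 : EuclideanSpace ℝ (Fin d)) 1))⁻¹ *
      volume (ball (0 : EuclideanSpace ℝ (Fin d)) 1) = 1 :=
  ENNReal.inv_mul_cancel (measure_ball_pos volume _ one_pos).ne' measure_ball_lt_top.ne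

instance [NeZero d] : IsProbabilityMeasure (sphereUniform d B) :=
  ⟨by simpa [sphereUniform_apply MeasurableSet.univ] using inv_volume_ball_mul_self⟩

lemma map_sphereUniform (e : EuclideanSpace ℝ (Fin d) ≃ₗᵢ[ℝ] EuclideanSpace ℝ (Fin d)) :
    (sphereUniform d B).map e = sphereUniform d B := by
  have hball : e ⁻¹' ball 0 1 = ball 0 1 := by
    ext y; simp
  have hvol :=
    (e.measurePreserving.restrict_preimage (measurableSet_ball (x := 0) (ε := 1))).map_eq
  rw [hball] at hvol
  have hcomm : e ∘ (fun y => (B / ‖y‖) • y) = (fun y => (B / ‖y‖) • y) ∘ e := by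
    ext1 y; simp [e.norm_map]
  rw [sphereUniform, Measure.map_map e.continuous.measurable (measurable_radial B), hcomm,
    ← Measure.map_map (measurable_radial B) e.continuous.measurable, Measure.map_smul, hvol]

lemma ae_norm_eq_sphereUniform [NeZero d] (hB : 0 < B) :
    ∀ᵐ z ∂(sphereUniform d B), ‖z‖ = B := by
  have hA : MeasurableSet {z : EuclideanSpace ℝ (Fin d) | ¬‖z‖ = B} :=
    (measurable_norm (measurableSet_singleton B)).compl
  rw [ae_iff, sphereUniform_apply hA]
  refine mul_eq_zero_of_right _ (measure_mono_null (fun y ⟨_, hy⟩ => ?_) (measure_singleton 0))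
  by_contra hy0
  apply hy
  simp [norm_smul, abs_of_pos hB, div_mul_cancel₀ B (norm_ne_zero_iff.2 hy0)]

lemma sphereUniform_setOf_inner_eq_zero (hB : B ≠ 0) {u : EuclideanSpace ℝ (Fin d)} (hu : u ≠ 0) :
    sphereUniform d B {y | ⟪y, u⟫ = 0} = 0 := by
  have hA : MeasurableSet {y : EuclideanSpace ℝ (Fin d) | ⟪y, u⟫ = 0} :=
    measurableSet_eq_fun (continuous_id.inner continuous_const).measurable measurable_const
  rw [sphereUniform_apply hA]
  refine mul_eq_zero_of_right _ (measure_mono_null (fun y ⟨_, hy⟩ => ?_)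
    (Measure.addHaar_submodule volume (ℝ ∙ u)ᗮ fun h => hu ?_))
  · rw [SetLike.mem_coe, Submodule.mem_orthogonal_singleton_iff_inner_left]
    rcases eq_or_ne y 0 with rfl | hy0
    · exact inner_zero_left _
    · simpa [real_inner_smul_left, hB, hy0] using hy
  · have hu' : u ∈ (ℝ ∙ u)ᗮ := h ▸ Submodule.mem_top
    exact inner_self_eq_zero.1 (Submodule.mem_orthogonal_singleton_iff_inner_left.1 hu')

lemma sphereUniform_setOf_inner_pos [NeZero d] (hB : B ≠ 0) {u : EuclideanSpace ℝ (Fin d)}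
    (hu : u ≠ 0) : sphereUniform d B {y | 0 < ⟪y, u⟫} = 2⁻¹ :=
  measure_setOf_inner_pos_eq_half (map_sphereUniform _) (sphereUniform_setOf_inner_eq_zero hB hu)

lemma sphereUniform_setOf_le_inner_le_sqrt_pow [NeZero d] (hB : 0 < B)
    {l : EuclideanSpace ℝ (Fin d)} (hl : ‖l‖ = 1) {r s : ℝ} (hr : 0 ≤ r) (hrs : r ≤ s)
    (hr2 : 2 * r ^ 2 ≤ 1) :
    sphereUniform d B {y | s * B ≤ ⟪l, y⟫} ≤ ENNReal.ofReal (√(1 - r ^ 2) ^ d) := by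
  have hA : MeasurableSet {y : EuclideanSpace ℝ (Fin d) | s * B ≤ ⟪l, y⟫} :=
    measurableSet_le measurable_const (continuous_const.inner continuous_id).measurable
  have hsub : ball 0 1 ∩ (fun y => (B / ‖y‖) • y) ⁻¹' {y | s * B ≤ ⟪l, y⟫} ⊆
      closedBall (r • l) √(1 - r ^ 2) := by
    rintro y ⟨hy1, hy2⟩
    have hcap : s * ‖y‖ ≤ ⟪l, y⟫ := by
      rcases eq_or_ne y 0 with rfl | hy0
      · simp
      have hny : 0 < ‖y‖ := norm_pos_iff.2 hy0
      simp only [Set.mem_preimage, Set.mem_ofPred_eq, real_inner_smul_right] at hy2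
      rw [div_mul_eq_mul_div, le_div_iff₀ hny] at hy2
      nlinarith
    rw [mem_closedBall, dist_eq_norm]
    exact Real.le_sqrt_of_sq_le
      (norm_sub_smul_sq_le_of_le_inner hl hr hrs hr2 (mem_ball_zero_iff.1 hy1).le hcap)
  calc sphereUniform d B {y | s * B ≤ ⟪l, y⟫}
      ≤ (volume (ball (0 : EuclideanSpace ℝ (Fin d)) 1))⁻¹ *
          volume (closedBall (r • l) √(1 - r ^ 2)) := by
        rw [sphereUniform_apply hA]; gcongr
    _ = ENNReal.ofReal (√(1 - r ^ 2) ^ d) := by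
        rw [Measure.addHaar_closedBall _ _ (Real.sqrt_nonneg _), finrank_euclideanSpace_fin,
          mul_left_comm, inv_volume_ball_mul_self, mul_one]

lemma sphereUniform_setOf_le_inner_le_exp [NeZero d] (hB : 0 < B)
    {l : EuclideanSpace ℝ (Fin d)} (hl : ‖l‖ = 1) {t : ℝ} (ht : 0 ≤ t) :
    sphereUniform d B {y | t ≤ ⟪l, y⟫} ≤ ENNReal.ofReal (exp (-(d * t ^ 2 / (4 * B ^ 2)))) := by
  rcases lt_or_ge B t with hBt | htB
  · refine (measure_mono_null ?_ (ae_iff.1 (ae_norm_eq_sphereUniform hB))).trans_le zero_le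
    intro y (hy : t ≤ ⟪l, y⟫) (hyB : ‖y‖ = B)
    have := real_inner_le_norm l y
    rw [hl, hyB, one_mul] at this
    linarith
  set r := t / (√2 * B)
  have hsqrt2 : 1 ≤ √2 := Real.one_le_sqrt.2 one_le_two
  have hr2 : r ^ 2 = t ^ 2 / (2 * B ^ 2) := by
    rw [div_pow, mul_pow, Real.sq_sqrt zero_le_two]
  have htail := sphereUniform_setOf_le_inner_le_sqrt_pow (d := d) hB hl (r := r) (s := t / B)
    (by positivity)
    (div_le_div_of_nonneg_left ht (by positivity) (le_mul_of_one_le_left hB.le hsqrt2))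
    (by rw [hr2, mul_div_assoc', div_le_one (by positivity)]; nlinarith)
  rw [div_mul_cancel₀ t hB.ne'] at htail
  refine htail.trans (ENNReal.ofReal_le_ofReal ?_)
  calc √(1 - r ^ 2) ^ d ≤ exp (-r ^ 2 / 2) ^ d := by
        gcongr
        rw [Real.exp_half]
        gcongr
        linarith [add_one_le_exp (-r ^ 2)]
    _ = exp (-(d * t ^ 2 / (4 * B ^ 2))) := by
        rw [← Real.exp_nat_mul, hr2]
        ring_nf

lemma sphereUniform_setOf_le_abs_inner_le_exp [NeZero d] (hB : 0 < B)
    {l : EuclideanSpace ℝ (Fin d)} (hl : ‖l‖ = 1) {t : ℝ} (ht : 0 ≤ t) :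
    sphereUniform d B {y | t ≤ |⟪l, y⟫|} ≤
      ENNReal.ofReal (2 * exp (-(d * t ^ 2 / (4 * B ^ 2)))) := by
  have hsub : {y | t ≤ |⟪l, y⟫|} ⊆ {y | t ≤ ⟪l, y⟫} ∪ {y | t ≤ ⟪-l, y⟫} := by
    intro y (hy : t ≤ |⟪l, y⟫|)
    rcases abs_cases ⟪l, y⟫ with ⟨h, -⟩ | ⟨h, -⟩
    · exact .inl (show t ≤ ⟪l, y⟫ by rwa [h] at hy)
    · exact .inr (by simpa [inner_neg_left, h] using hy)
  calc sphereUniform d B {y | t ≤ |⟪l, y⟫|}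
      ≤ sphereUniform d B {y | t ≤ ⟪l, y⟫} + sphereUniform d B {y | t ≤ ⟪-l, y⟫} :=
        (measure_mono hsub).trans (measure_union_le _ _)
    _ ≤ ENNReal.ofReal (exp (-(d * t ^ 2 / (4 * B ^ 2)))) +
          ENNReal.ofReal (exp (-(d * t ^ 2 / (4 * B ^ 2)))) :=
        add_le_add (sphereUniform_setOf_le_inner_le_exp hB hl ht)
          (sphereUniform_setOf_le_inner_le_exp hB (by rw [norm_neg, hl]) ht)
    _ = ENNReal.ofReal (2 * exp (-(d * t ^ 2 / (4 * B ^ 2)))) := by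
        rw [← ENNReal.ofReal_add (exp_nonneg _) (exp_nonneg _), two_mul]

lemma cond_sphereUniform_le_two_smul [NeZero d] (hB : B ≠ 0) {u : EuclideanSpace ℝ (Fin d)}
    (hu : u ≠ 0) :
    (sphereUniform d B)[|{y | 0 < ⟪y, u⟫}] ≤ (2 : ℝ≥0∞) • sphereUniform d B := by
  simpa [sphereUniform_setOf_inner_pos hB hu] using
    cond_le_inv_smul (sphereUniform d B) {y | 0 < ⟪y, u⟫}

lemma isProbabilityMeasure_cond_sphereUniform [NeZero d] (hB : B ≠ 0)
    {u : EuclideanSpace ℝ (Fin d)} (hu : u ≠ 0) :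
    IsProbabilityMeasure ((sphereUniform d B)[|{y | 0 < ⟪y, u⟫}]) :=
  cond_isProbabilityMeasure (by simp [sphereUniform_setOf_inner_pos hB hu])

lemma sq_integral_inner_cond_sphereUniform_le [NeZero d] (hB : 0 < B)
    {l u : EuclideanSpace ℝ (Fin d)} (hl : ‖l‖ = 1) (hu : u ≠ 0) :
    (∫ z, ⟪l, z⟫ ∂(sphereUniform d B)[|{y | 0 < ⟪y, u⟫}]) ^ 2 ≤ 2 * B ^ 2 / d := by
  set ν := (sphereUniform d B)[|{y | 0 < ⟪y, u⟫}]
  have := isProbabilityMeasure_cond_sphereUniform (d := d) hB.ne' hu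
  have hnorm := ae_norm_eq_sphereUniform (d := d) hB
  have hnorm_le := hnorm.mono fun _ => le_of_eq
  have hX : MemLp (fun z => ⟪l, z⟫) 2 ν :=
    memLp_inner_of_ae_norm_le (cond_absolutelyContinuous.ae_le hnorm_le) l 2
  calc (∫ z, ⟪l, z⟫ ∂ν) ^ 2 ≤ ∫ z, ⟪l, z⟫ ^ 2 ∂ν := by
        have := variance_nonneg (fun z => ⟪l, z⟫) ν
        rw [variance_eq_sub hX] at this
        simpa [sub_nonneg] using this
    _ ≤ ∫ z, ⟪l, z⟫ ^ 2 ∂((2 : ℝ≥0∞) • sphereUniform d B) :=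
        integral_mono_measure (cond_sphereUniform_le_two_smul hB.ne' hu)
          (.of_forall fun _ => sq_nonneg _)
          ((memLp_inner_of_ae_norm_le hnorm_le l 2).integrable_sq.smul_measure
            ENNReal.ofNat_ne_top)
    _ = 2 * B ^ 2 / d := by
        rw [integral_smul_measure, integral_inner_sq_eq_of_isometry_invariant map_sphereUniform
          hnorm hl, finrank_euclideanSpace_fin, ENNReal.toReal_ofNat, smul_eq_mul, mul_div_assoc]

end Sphere

/-- Concentration of a linear functional on a hemisphere: there is a
universal constant `c > 0` such that if `Y` is uniform on the hemisphere
`S₁ = {y ∈ S^{d−1}(B) : ⟨y,u⟩ > 0}` then for all `t ≥ 0`,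
`Pr(|⟨ℓ,Y⟩ − E⟨ℓ,Y⟩| ≥ t) ≤ 4 exp(−c d t²/B²)`. -/
theorem stmt10 :
    ∃ c : ℝ, 0 < c ∧
      ∀ (d : ℕ), 2 ≤ d → ∀ B : ℝ, 0 < B →
      ∀ l u : EuclideanSpace ℝ (Fin d), ‖l‖ = 1 → ‖u‖ = 1 →
      ∀ t : ℝ, 0 ≤ t →
        (sphereUniform d B)[|{y | 0 < ⟪y, u⟫}]
            {y | t ≤ |⟪l, y⟫ - ∫ z, ⟪l, z⟫ ∂((sphereUniform d B)[|{y | 0 < ⟪y, u⟫}])|}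
          ≤ ENNReal.ofReal (4 * Real.exp (-(c * d * t ^ 2 / B ^ 2))) := by
  refine ⟨1 / 16, by norm_num, fun d hd B hB l u hl hu t ht => ?_⟩
  have : NeZero d := ⟨by omega⟩
  have hu0 : u ≠ 0 := norm_ne_zero_iff.1 (by simp [hu])
  have := isProbabilityMeasure_cond_sphereUniform (d := d) hB.ne' hu0
  set ν := (sphereUniform d B)[|{y | 0 < ⟪y, u⟫}]
  set m := ∫ z, ⟪l, z⟫ ∂ν
  have hm : m ^ 2 * d ≤ 2 * B ^ 2 :=
    (le_div_iff₀ (by positivity)).1 (sq_integral_inner_cond_sphereUniform_le hB hl hu0)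
  rcases le_or_gt t (2 * |m|) with hsmall | hlarge
  · have hexp : 1 / 16 * d * t ^ 2 / B ^ 2 ≤ 1 / 2 := by
      have : (d : ℝ) * t ^ 2 ≤ 8 * B ^ 2 := by
        have : t ^ 2 ≤ 4 * m ^ 2 := by nlinarith [sq_abs m]
        nlinarith [Nat.cast_nonneg (α := ℝ) d]
      rw [div_le_iff₀ (by positivity)]
      linarith
    calc ν _ ≤ 1 := prob_le_one
      _ ≤ _ := ENNReal.one_le_ofReal.2
        (by linarith [add_one_le_exp (-(1 / 16 * d * t ^ 2 / B ^ 2))])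
  · have hsub : {y | t ≤ |⟪l, y⟫ - m|} ⊆ {y | t / 2 ≤ |⟪l, y⟫|} := fun y (hy : t ≤ _) =>
      show t / 2 ≤ _ by linarith [abs_sub ⟪l, y⟫ m]
    calc ν {y | t ≤ |⟪l, y⟫ - m|} ≤ ν {y | t / 2 ≤ |⟪l, y⟫|} := measure_mono hsub
      _ ≤ 2 * sphereUniform d B {y | t / 2 ≤ |⟪l, y⟫|} :=
        cond_sphereUniform_le_two_smul hB.ne' hu0 _
      _ ≤ 2 * ENNReal.ofReal (2 * exp (-(d * (t / 2) ^ 2 / (4 * B ^ 2)))) := by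
        gcongr
        exact sphereUniform_setOf_le_abs_inner_le_exp hB hl (by positivity)
      _ = ENNReal.ofReal (4 * exp (-(1 / 16 * d * t ^ 2 / B ^ 2))) := by
        rw [← ENNReal.ofReal_ofNat 2, ← ENNReal.ofReal_mul zero_le_two]
        ring_nf
end

section
/- Let m, d ≥ 1, ε > 0, c = (e^ε+1)/(e^ε−1), Φ ∈ ℝ^{m×d}, and x ∈ [d]. Let J be uniformly distributed on [m], and independently let S = 1 with probability e^ε/(e^ε+1) and S = −1 with probability 1/(e^ε+1). Define the random vector z ∈ ℝ^m by z_J = S · c · m · (Φe_x)_J and z_ℓ = 0 for all ℓ ≠ J. Then E[z] = Φ e_x. -/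
open MeasureTheory ProbabilityTheory Real
open scoped ENNReal BigOperators

/-! Coordinate `j` of `z` is `1_{J = j} · S · c m Φ_{jx}`. By independence of `J` and `S` its mean
is `Pr(J = j) · E[S] · c m Φ_{jx}`, and `Pr(J = j) = 1/m` while
`E[S] = (e^ε - 1)/(e^ε + 1) = 1/c`. -/

section RandomSign

variable {Ω : Type*} [MeasurableSpace Ω] {μ : Measure Ω} {S : Ω → ℝ}

lemma integrable_of_ae_eq_one_or_neg_one [IsFiniteMeasure μ] (hSm : Measurable S)
    (hS : ∀ᵐ ω ∂μ, S ω = 1 ∨ S ω = -1) : Integrable S μ :=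
  .of_bound hSm.aestronglyMeasurable 1 <| by
    filter_upwards [hS] with ω hω
    rcases hω with h | h <;> simp [h]

lemma integral_of_ae_eq_one_or_neg_one [IsProbabilityMeasure μ] (hSm : Measurable S)
    (hS : ∀ᵐ ω ∂μ, S ω = 1 ∨ S ω = -1) :
    ∫ ω, S ω ∂μ = 2 * μ.real {ω | S ω = 1} - 1 := by
  have hB : MeasurableSet {ω | S ω = 1} := hSm (measurableSet_singleton 1)
  have hS_eq : S =ᵐ[μ] fun ω => {ω | S ω = 1}.indicator (fun _ => (2 : ℝ)) ω - 1 := by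
    filter_upwards [hS] with ω hω
    rcases hω with h | h <;> norm_num [Set.indicator, h]
  rw [integral_congr_ae hS_eq, integral_sub ((integrable_const 2).indicator hB)
    (integrable_const 1), integral_indicator_const _ hB]
  simp [mul_comm]

end RandomSign

lemma integral_indicator_eq_measureReal_mul_integral {Ω ι : Type*} [MeasurableSpace Ω]
    {μ : Measure Ω} [MeasurableSpace ι] [MeasurableSingletonClass ι]
    {J : Ω → ι} {S : Ω → ℝ} (hJ : Measurable J) (hS : AEStronglyMeasurable S μ)
    (hJS : IndepFun J S μ) (j : ι) :
    ∫ ω, {ω | J ω = j}.indicator S ω ∂μ = μ.real {ω | J ω = j} * ∫ ω, S ω ∂μ := by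
  have hφ : Measurable (({j} : Set ι).indicator (1 : ι → ℝ)) :=
    measurable_const.indicator (measurableSet_singleton j)
  calc ∫ ω, {ω | J ω = j}.indicator S ω ∂μ
      = ∫ ω, ({j} : Set ι).indicator 1 (J ω) * S ω ∂μ := by
        congr 1 with ω
        by_cases h : J ω = j <;> simp [h]
    _ = (∫ ω, ({j} : Set ι).indicator 1 (J ω) ∂μ) * ∫ ω, S ω ∂μ :=
        (hJS.comp hφ measurable_id).integral_fun_mul_eq_mul_integral
          (hφ.comp hJ).aestronglyMeasurable hS
    _ = μ.real {ω | J ω = j} * ∫ ω, S ω ∂μ := by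
        congr 1
        exact integral_indicator_one (hJ (measurableSet_singleton j))

open Classical in
theorem stmt18_general (m d : ℕ) (ε : ℝ) (hε : 0 < ε)
    (Φ : Matrix (Fin m) (Fin d) ℝ) (x : Fin d)
    (Ω : Type) [MeasurableSpace Ω] (Pr : Measure Ω) [IsProbabilityMeasure Pr]
    (J : Ω → Fin m) (S : Ω → ℝ)
    (hJm : Measurable J) (hSm : Measurable S)
    (hindep : IndepFun J S Pr)
    -- J is uniform on [m]
    (hJunif : ∀ j, Pr {ω | J ω = j} = (m : ℝ≥0∞)⁻¹)
    -- S = 1 with probability e^ε/(e^ε+1), S = −1 otherwise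
    (hS1 : ∀ᵐ ω ∂Pr, S ω = 1 ∨ S ω = -1)
    (hSlaw : Pr {ω | S ω = 1} = ENNReal.ofReal (Real.exp ε / (Real.exp ε + 1))) :
    (∫ ω, (fun j => if j = J ω then
        S ω * ((Real.exp ε + 1) / (Real.exp ε - 1)) * m * Φ (J ω) x else 0 : Fin m → ℝ) ∂Pr)
      = fun j => Φ j x := by
  set c := (Real.exp ε + 1) / (Real.exp ε - 1)
  have hSint := integrable_of_ae_eq_one_or_neg_one hSm hS1
  have hcoord (j : Fin m) : (fun ω => if j = J ω then S ω * c * m * Φ (J ω) x else 0) =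
      fun ω => {ω | J ω = j}.indicator S ω * (c * m * Φ j x) := by
    ext ω
    by_cases h : J ω = j
    · subst h
      simp [mul_assoc]
    · simp [h, Ne.symm h]
  have hint (j : Fin m) :
      Integrable (fun ω => {ω | J ω = j}.indicator S ω * (c * m * Φ j x)) Pr :=
    (hSint.indicator (hJm (measurableSet_singleton j))).mul_const _
  funext j
  rw [eval_integral (fun i => hcoord i ▸ hint i) j, hcoord j, integral_mul_const,
    integral_indicator_eq_measureReal_mul_integral hJm hSm.aestronglyMeasurable hindep,
    integral_of_ae_eq_one_or_neg_one hSm hS1, measureReal_def, measureReal_def, hJunif, hSlaw,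
    ENNReal.toReal_inv, ENNReal.toReal_natCast, ENNReal.toReal_ofReal (by positivity)]
  have hm : (m : ℝ) ≠ 0 := by have := j.pos; positivity
  have hE : Real.exp ε - 1 ≠ 0 := by linarith [Real.add_one_lt_exp hε.ne']
  simp only [c]
  field_simp
  ring

open Classical in
/-- Unbiasedness of the local randomizer in the projected frequency
estimation scheme: with `c = (e^ε+1)/(e^ε−1)`, a uniformly random coordinate `J ∈ [m]`,
and an independent sign `S` with `Pr(S = 1) = e^ε/(e^ε+1)` and `S = −1` otherwise, the
random vector `z` with `z_J = S · c · m · (Φe_x)_J` and all other coordinates `0`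
satisfies `E[z] = Φe_x`. -/
theorem stmt18 (m d : ℕ) (hm : 1 ≤ m) (hd : 1 ≤ d) (ε : ℝ) (hε : 0 < ε)
    (Φ : Matrix (Fin m) (Fin d) ℝ) (x : Fin d)
    (Ω : Type) [MeasurableSpace Ω] (Pr : Measure Ω) [IsProbabilityMeasure Pr]
    (J : Ω → Fin m) (S : Ω → ℝ)
    (hJm : Measurable J) (hSm : Measurable S)
    (hindep : IndepFun J S Pr)
    -- J is uniform on [m]
    (hJunif : ∀ j, Pr {ω | J ω = j} = (m : ℝ≥0∞)⁻¹)
    -- S = 1 with probability e^ε/(e^ε+1), S = −1 otherwise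
    (hS1 : ∀ᵐ ω ∂Pr, S ω = 1 ∨ S ω = -1)
    (hSlaw : Pr {ω | S ω = 1} = ENNReal.ofReal (Real.exp ε / (Real.exp ε + 1))) :
    (∫ ω, (fun j => if j = J ω then
        S ω * ((Real.exp ε + 1) / (Real.exp ε - 1)) * m * Φ (J ω) x else 0 : Fin m → ℝ) ∂Pr)
      = fun j => Φ j x :=
  stmt18_general m d ε hε Φ x Ω Pr J S hJm hSm hindep hJunif hS1 hSlaw
end

section
/- There is a universal constant c > 0 with the following property. For every d ≥ 1, n ≥ 1, ε₁,…,ε_n ∈ (0,1], and β ∈ (0,1), there exist measurable spaces Y₁,…,Y_n, Markov kernels Cᵢ from [d] to Yᵢ such that Cᵢ is εᵢ-LDP for each i, and a measurable estimator p̂ : Y₁ × ⋯ × Y_n → ℝ^d, such that for every probability distribution P on [d], with X₁,…,X_n i.i.d. P and, conditionally, Yᵢ ∼ Cᵢ(Xᵢ) independently across i, with probability at least 1 − β one has max_{v∈[d]} | p̂(Y₁,…,Y_n)_v − P({v}) | ≤ min( c · sqrt( log(d/β) / Σ_{i=1}^n εᵢ² ), 1 ). -/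
/-!
Each user reports the one-hot encoding of its value through randomized response, sending bit `v`
as `1` with probability `σ(±εᵢ/2)` (`σ` the logistic sigmoid, sign `+` iff the value is `v`).
Changing the value changes the law of only two bits, each by a factor at most `e^{εᵢ/2}`, so the
report is `εᵢ`-LDP. Affinely debiased bits are unbiased for `P{v}` and have range
`1 / (σ(εᵢ/2) - σ(-εᵢ/2)) ≤ 6 / εᵢ`. Weighting user `i` by `εᵢ²` makes Hoeffding's inequality
give a deviation of order `sqrt (log (d/β) / ∑ εᵢ²)` for each coordinate, and a union bound over
the `d` coordinates and both tails costs the `log d`. Clamping to `[0, 1]` only decreases the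
error and caps it at `1`; for `d = 1` the constant estimate `1` is exact.
-/

open MeasureTheory ProbabilityTheory Real
open scoped ENNReal BigOperators

/-- A kernel `C` is `ε`-LDP if `C x W ≤ e^ε · C x' W` for all inputs `x, x'` and
measurable `W`. -/
def IsLDP {α β : Type*} [MeasurableSpace α] [MeasurableSpace β]
    (C : ProbabilityTheory.Kernel α β) (ε : ℝ) : Prop :=
  ∀ x x' : α, ∀ W : Set β, MeasurableSet W →
    C x W ≤ ENNReal.ofReal (Real.exp ε) * C x' W

section Hoeffding

variable {ι : Type*} [Fintype ι] {Ω : ι → Type*} [∀ i, MeasurableSpace (Ω i)]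
  {μ : ∀ i, Measure (Ω i)} [∀ i, IsProbabilityMeasure (μ i)]
  {f : ∀ i, Ω i → ℝ} {a b : ι → ℝ}

lemma measureReal_sum_sub_integral_ge_le (hf : ∀ i, Measurable (f i))
    (hab : ∀ i z, f i z ∈ Set.Icc (a i) (b i)) {r : ℝ} (hr : 0 ≤ r) :
    (Measure.pi μ).real {ω | r ≤ ∑ i, (f i (ω i) - ∫ z, f i z ∂μ i)}
      ≤ exp (-r ^ 2 / (2 * ∑ i, ((b i - a i) / 2) ^ 2)) := by
  have hindep : iIndepFun (fun i ω ↦ f i (ω i) - ∫ z, f i z ∂μ i) (Measure.pi μ) :=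
    iIndepFun_pi (Ω := Ω) (𝓧 := fun _ ↦ ℝ)
      (X := fun i z ↦ f i z - ∫ z, f i z ∂μ i) fun i ↦ ((hf i).sub_const _).aemeasurable
  have hsubG : ∀ i ∈ Finset.univ,
      HasSubgaussianMGF (fun ω ↦ f i (ω i) - ∫ z, f i z ∂μ i)
        ((‖b i - a i‖₊ / 2) ^ 2) (Measure.pi μ) := by
    intro i _
    have h : HasSubgaussianMGF (fun z ↦ f i z - ∫ z, f i z ∂μ i)
        ((‖b i - a i‖₊ / 2) ^ 2) ((Measure.pi μ).map (Function.eval i)) := by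
      rw [(measurePreserving_eval μ i).map_eq]
      exact hasSubgaussianMGF_of_mem_Icc (hf i).aemeasurable (ae_of_all _ (hab i))
    exact h.of_map (measurable_pi_apply i).aemeasurable
  convert HasSubgaussianMGF.measure_sum_ge_le_of_iIndepFun hindep hsubG hr using 4
  push_cast
  simp [div_pow]

lemma measureReal_abs_sum_sub_integral_ge_le (hf : ∀ i, Measurable (f i))
    (hab : ∀ i z, f i z ∈ Set.Icc (a i) (b i)) {r : ℝ} (hr : 0 ≤ r) :
    (Measure.pi μ).real {ω | r ≤ |∑ i, (f i (ω i) - ∫ z, f i z ∂μ i)|}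
      ≤ 2 * exp (-r ^ 2 / (2 * ∑ i, ((b i - a i) / 2) ^ 2)) := by
  have hneg := measureReal_sum_sub_integral_ge_le (μ := μ) (f := fun i z ↦ -f i z)
    (a := fun i ↦ -b i) (b := fun i ↦ -a i) (fun i ↦ (hf i).neg)
    (fun i z ↦ ⟨neg_le_neg (hab i z).2, neg_le_neg (hab i z).1⟩) hr
  have hset : {ω : ∀ i, Ω i | r ≤ |∑ i, (f i (ω i) - ∫ z, f i z ∂μ i)|}
      ⊆ {ω | r ≤ ∑ i, (f i (ω i) - ∫ z, f i z ∂μ i)}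
        ∪ {ω | r ≤ ∑ i, (-f i (ω i) - ∫ z, -f i z ∂μ i)} := by
    intro ω hω
    have hsum : ∑ i, (-f i (ω i) - ∫ z, -f i z ∂μ i)
        = -∑ i, (f i (ω i) - ∫ z, f i z ∂μ i) := by
      simp only [integral_neg, ← Finset.sum_neg_distrib]
      ring_nf
    rcases le_abs'.mp (Set.mem_ofPred.mp hω) with h | h
    · exact Or.inr (by rw [Set.mem_ofPred, hsum]; linarith)
    · exact Or.inl h
  calc _ ≤ _ := measureReal_mono hset
    _ ≤ _ := measureReal_union_le _ _
    _ ≤ _ := add_le_add (measureReal_sum_sub_integral_ge_le hf hab hr) hneg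
    _ = _ := by simp only [neg_sub_neg]; ring

end Hoeffding

lemma Real.sigmoid_le_exp_mul_sigmoid {s s' t : ℝ} (hs : |s| ≤ t) (hs' : |s'| ≤ t) :
    sigmoid s ≤ exp t * sigmoid s' :=
  calc sigmoid s ≤ sigmoid t := sigmoid_le (le_of_abs_le hs)
    _ = exp t * sigmoid (-t) := by
      rw [← sigmoid_mul_rexp_neg, mul_left_comm, ← exp_add, add_neg_cancel, exp_zero, mul_one]
    _ ≤ exp t * sigmoid s' := by gcongr; exact neg_le_of_abs_le hs'

lemma Real.div_three_le_sigmoid_sub_sigmoid_neg {t : ℝ} (h0 : 0 ≤ t) (h1 : t ≤ 1) :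
    t / 3 ≤ sigmoid t - sigmoid (-t) := by
  have hexp : (3 - t) * (1 + t) ≤ (3 - t) * exp t := by
    gcongr
    · linarith
    · linarith [add_one_le_exp t]
  rw [sigmoid_neg, sigmoid_def, exp_neg]
  have := exp_pos t
  field_simp
  nlinarith

lemma isLDP_of_forall_singleton {α β : Type*} [MeasurableSpace α] [MeasurableSpace β]
    [Fintype β] [MeasurableSingletonClass β] {C : Kernel α β} {ε : ℝ}
    (h : ∀ x x' y, C x {y} ≤ ENNReal.ofReal (exp ε) * C x' {y}) : IsLDP C ε := by
  classical
  intro x x' W _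
  rw [← W.coe_toFinset, ← sum_measure_singleton, ← sum_measure_singleton, Finset.mul_sum]
  exact Finset.sum_le_sum fun y _ ↦ h x x' y

lemma bernoulliMeasure_sigmoid_apply_singleton (s : ℝ) (b : Bool) :
    Ber(true, false, unitInterval.sigmoid s) {b}
      = ENNReal.ofReal (sigmoid (if b then s else -s)) := by
  rw [← ofReal_measureReal]
  cases b <;> simp [sigmoid_neg, unitInterval.sigmoid, Subtype.coind]

lemma MeasureTheory.Measure.integral_comp_eq_sum_of_fintype {α β : Type*} [MeasurableSpace α]
    [MeasurableSpace β] [Fintype α] [MeasurableSingletonClass α] {κ : Kernel α β}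
    {P : Measure α} [IsFiniteMeasure P] {f : β → ℝ} (hf : Integrable f (κ ∘ₘ P)) :
    ∫ y, f y ∂(κ ∘ₘ P) = ∑ x, P.real {x} * ∫ y, f y ∂κ x := by
  rw [Measure.comp_eq_comp_const_apply] at hf ⊢
  rw [Kernel.integral_comp hf, Kernel.const_apply, integral_fintype]
  · simp
  · exact .of_finite

lemma abs_projIcc_sub_le_min (x : ℝ) {q : ℝ} (hq : q ∈ Set.Icc (0 : ℝ) 1) :
    |(Set.projIcc 0 1 zero_le_one x : ℝ) - q| ≤ min |x - q| 1 := by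
  have hp := (Set.projIcc (0 : ℝ) 1 zero_le_one x).2
  refine le_min ?_ (abs_sub_le_iff.mpr ⟨by linarith [hp.2, hq.1], by linarith [hp.1, hq.2]⟩)
  simpa [Set.projIcc_of_mem zero_le_one hq] using
    Set.abs_projIcc_sub_projIcc (a := (0 : ℝ)) (b := 1) zero_le_one (c := x) (d := q)

noncomputable section RandomizedResponse

def rrGap (ε : ℝ) : ℝ := sigmoid (ε / 2) - sigmoid (-(ε / 2))

lemma rrGap_pos {ε : ℝ} (hε : 0 < ε) : 0 < rrGap ε :=
  sub_pos.mpr (sigmoid_lt (by linarith))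

lemma div_six_le_rrGap {ε : ℝ} (hε : ε ∈ Set.Ioc 0 1) : ε / 6 ≤ rrGap ε := by
  have := div_three_le_sigmoid_sub_sigmoid_neg (t := ε / 2) (by linarith [hε.1])
    (by linarith [hε.2])
  rw [rrGap]
  linarith

lemma sq_mul_inv_rrGap_div_two_le {ε : ℝ} (hε : ε ∈ Set.Ioc 0 1) :
    (ε ^ 2 * (rrGap ε)⁻¹ / 2) ^ 2 ≤ 9 * ε ^ 2 := by
  have hg := rrGap_pos hε.1
  have hle : ε ^ 2 * (rrGap ε)⁻¹ / 2 ≤ 3 * ε := by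
    rw [← div_eq_mul_inv, div_div, div_le_iff₀ (by positivity)]
    nlinarith [hε.1, div_six_le_rrGap hε]
  nlinarith [mul_nonneg (sq_nonneg ε) (inv_pos.mpr hg).le]

def rrDebias (ε : ℝ) (b : Bool) : ℝ := ((if b then 1 else 0) - sigmoid (-(ε / 2))) / rrGap ε

lemma rrDebias_mem_Icc {ε : ℝ} (hε : 0 < ε) (b : Bool) :
    rrDebias ε b ∈ Set.Icc (rrDebias ε false) (rrDebias ε false + (rrGap ε)⁻¹) := by
  have := rrGap_pos hε
  cases b
  · simp [this.le]
  · simp only [rrDebias, Set.mem_Icc]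
    constructor
    · gcongr; simp
    · field_simp; simp

def rrEstimator {ι α : Type*} [Fintype ι] (ε : ι → ℝ) (ω : ι → α → Bool) (v : α) :
    ℝ :=
  Set.projIcc (0 : ℝ) 1 zero_le_one
    ((∑ i, ε i ^ 2 * rrDebias (ε i) (ω i v)) / ∑ i, ε i ^ 2)

lemma compl_setOf_abs_rrEstimator_sub_le_subset {ι α : Type*} [Fintype ι] {ε : ι → ℝ}
    (hS : 0 < ∑ i, ε i ^ 2) {q : α → ℝ} (hq : ∀ v, q v ∈ Set.Icc 0 1) (t : ℝ) :
    {ω | ∀ v, |rrEstimator ε ω v - q v| ≤ min t 1}ᶜ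
      ⊆ ⋃ v, {ω | (∑ i, ε i ^ 2) * t
          ≤ |∑ i, ε i ^ 2 * rrDebias (ε i) (ω i v) - (∑ i, ε i ^ 2) * q v|} := by
  set S := ∑ i, ε i ^ 2
  intro ω hω
  simp only [Set.mem_compl_iff, Set.mem_ofPred, not_forall, not_le] at hω
  obtain ⟨v, hv⟩ := hω
  have hlt := hv.trans_le (abs_projIcc_sub_le_min _ (hq v))
  have hraw : t < |(∑ i, ε i ^ 2 * rrDebias (ε i) (ω i v)) / S - q v| :=
    lt_of_not_ge fun h ↦ (min_le_min_right 1 h).not_gt hlt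
  refine Set.mem_iUnion.mpr ⟨v, ?_⟩
  calc S * t ≤ S * |(∑ i, ε i ^ 2 * rrDebias (ε i) (ω i v)) / S - q v| := by gcongr
    _ = |S * ((∑ i, ε i ^ 2 * rrDebias (ε i) (ω i v)) / S - q v)| := by
      rw [abs_mul, abs_of_pos hS]
    _ = |∑ i, ε i ^ 2 * rrDebias (ε i) (ω i v) - S * q v| := by
      rw [mul_sub, mul_div_cancel₀ _ hS.ne']

variable {α : Type*} [DecidableEq α]

def rrLogit (ε : ℝ) (x v : α) : ℝ := if x = v then ε / 2 else -(ε / 2)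

lemma abs_rrLogit_le {ε : ℝ} (hε : 0 ≤ ε) (x v : α) (b : Bool) :
    |if b then rrLogit ε x v else -rrLogit ε x v| ≤ ε / 2 := by
  have : |ε / 2| = ε / 2 := abs_of_nonneg (by linarith)
  unfold rrLogit
  split_ifs <;> simp [this]

variable [Fintype α] [MeasurableSpace α] [MeasurableSingletonClass α]

def rrKernel (ε : ℝ) : Kernel α (α → Bool) :=
  Kernel.ofFunOfCountable fun x ↦
    Measure.pi fun v ↦ Ber(true, false, unitInterval.sigmoid (rrLogit ε x v))

instance (ε : ℝ) : IsMarkovKernel (rrKernel (α := α) ε) :=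
  ⟨fun x ↦ by simp only [rrKernel, Kernel.ofFunOfCountable, Kernel.coe_mk]; infer_instance⟩

lemma rrKernel_apply_singleton (ε : ℝ) (x : α) (y : α → Bool) :
    rrKernel ε x {y}
      = ∏ v, ENNReal.ofReal (sigmoid (if y v then rrLogit ε x v else -rrLogit ε x v)) := by
  simp [rrKernel, Kernel.ofFunOfCountable, bernoulliMeasure_sigmoid_apply_singleton]

lemma rrKernel_singleton_le {ε : ℝ} (hε : 0 ≤ ε) (x x' : α) (y : α → Bool) :
    rrKernel ε x {y} ≤ ENNReal.ofReal (exp ε) * rrKernel ε x' {y} := by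
  set F : α → α → ℝ≥0∞ := fun z v ↦
    ENNReal.ofReal (sigmoid (if y v then rrLogit ε z v else -rrLogit ε z v))
  set c := ENNReal.ofReal (exp (ε / 2))
  set s : Finset α := {x, x'}
  -- Only the bits `x` and `x'` have different laws under the inputs `x` and `x'`.
  have hfactor : ∀ v, F x v ≤ (if v ∈ s then c else 1) * F x' v := by
    intro v
    split_ifs with hv
    · rw [← ENNReal.ofReal_mul (exp_nonneg _)]
      exact ENNReal.ofReal_le_ofReal
        (sigmoid_le_exp_mul_sigmoid (abs_rrLogit_le hε x v _) (abs_rrLogit_le hε x' v _))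
    · simp only [s, Finset.mem_insert, Finset.mem_singleton, not_or] at hv
      simp [F, rrLogit, Ne.symm hv.1, Ne.symm hv.2]
  have hcard : (∏ v, if v ∈ s then c else 1) ≤ ENNReal.ofReal (exp ε) := by
    rw [Fintype.prod_ite_mem, Finset.prod_const]
    calc c ^ s.card ≤ c ^ 2 :=
          pow_le_pow_right₀ (by simpa [c] using one_le_exp (by linarith)) Finset.card_le_two
      _ = ENNReal.ofReal (exp ε) := by
          rw [← ENNReal.ofReal_pow (exp_nonneg _), ← exp_nat_mul]; congr 2; ring
  calc rrKernel ε x {y} = ∏ v, F x v := rrKernel_apply_singleton ε x y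
    _ ≤ ∏ v, (if v ∈ s then c else 1) * F x' v := Finset.prod_le_prod' fun v _ ↦ hfactor v
    _ ≤ ENNReal.ofReal (exp ε) * rrKernel ε x' {y} := by
        rw [Finset.prod_mul_distrib, rrKernel_apply_singleton ε x' y]
        gcongr

lemma isLDP_rrKernel {ε : ℝ} (hε : 0 ≤ ε) : IsLDP (rrKernel (α := α) ε) ε :=
  isLDP_of_forall_singleton (rrKernel_singleton_le hε)

lemma integral_rrDebias_rrKernel {ε : ℝ} (hε : 0 < ε) (x v : α) :
    ∫ z, rrDebias ε (z v) ∂rrKernel ε x = if x = v then 1 else 0 := by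
  rw [rrKernel, Kernel.ofFunOfCountable, Kernel.coe_mk, integral_comp_eval (by fun_prop),
    integral_bernoulliMeasure]
  have hgap := (rrGap_pos hε).ne'
  have hmean : ∀ p : ℝ, p * ((1 - sigmoid (-(ε / 2))) / rrGap ε)
      + (1 - p) * ((0 - sigmoid (-(ε / 2))) / rrGap ε)
      = (p - sigmoid (-(ε / 2))) / rrGap ε := by
    intro p; field_simp; ring
  simp only [rrDebias, unitInterval.sigmoid, Subtype.coind, smul_eq_mul, if_true,
    Bool.false_eq_true, if_false, hmean, rrLogit]
  split_ifs
  · exact div_self hgap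
  · simp

lemma integral_rrDebias_comp {ε : ℝ} (hε : 0 < ε) (P : Measure α) [IsProbabilityMeasure P]
    (v : α) : ∫ z, rrDebias ε (z v) ∂(rrKernel ε ∘ₘ P) = P.real {v} := by
  rw [Measure.integral_comp_eq_sum_of_fintype .of_finite]
  simp [integral_rrDebias_rrKernel hε]

lemma rrDebias_sum_deviation_le {ι : Type*} [Fintype ι] [Nonempty ι] {ε : ι → ℝ}
    (hε : ∀ i, ε i ∈ Set.Ioc 0 1) (P : Measure α) [IsProbabilityMeasure P] (v : α) {r : ℝ}
    (hr : 0 ≤ r) :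
    (Measure.pi fun i ↦ rrKernel (ε i) ∘ₘ P).real
        {ω | r ≤ |∑ i, ε i ^ 2 * rrDebias (ε i) (ω i v) - (∑ i, ε i ^ 2) * P.real {v}|}
      ≤ 2 * exp (-r ^ 2 / (18 * ∑ i, ε i ^ 2)) := by
  have hε0 : ∀ i, 0 < ε i := fun i ↦ (hε i).1
  have hg : ∀ i, 0 < rrGap (ε i) := fun i ↦ rrGap_pos (hε0 i)
  have hbound := measureReal_abs_sum_sub_integral_ge_le (μ := fun i ↦ rrKernel (ε i) ∘ₘ P)
    (f := fun i z ↦ ε i ^ 2 * rrDebias (ε i) (z v))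
    (a := fun i ↦ ε i ^ 2 * rrDebias (ε i) false)
    (b := fun i ↦ ε i ^ 2 * rrDebias (ε i) false + ε i ^ 2 * (rrGap (ε i))⁻¹)
    (fun i ↦ by fun_prop)
    (fun i z ↦ have h := rrDebias_mem_Icc (hε0 i) (z v)
      ⟨mul_le_mul_of_nonneg_left h.1 (sq_nonneg _),
        (mul_le_mul_of_nonneg_left h.2 (sq_nonneg _)).trans_eq (mul_add _ _ _)⟩) hr
  have hsum : ∀ ω : ι → α → Bool, ∑ i, (ε i ^ 2 * rrDebias (ε i) (ω i v)
      - ∫ z, ε i ^ 2 * rrDebias (ε i) (z v) ∂(rrKernel (ε i) ∘ₘ P))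
      = ∑ i, ε i ^ 2 * rrDebias (ε i) (ω i v) - (∑ i, ε i ^ 2) * P.real {v} := by
    intro ω
    simp only [integral_const_mul, integral_rrDebias_comp (hε0 _), Finset.sum_sub_distrib,
      Finset.sum_mul]
  simp only [hsum, add_sub_cancel_left] at hbound
  have hvar : ∑ i, (ε i ^ 2 * (rrGap (ε i))⁻¹ / 2) ^ 2 ≤ 9 * ∑ i, ε i ^ 2 := by
    rw [Finset.mul_sum]
    exact Finset.sum_le_sum fun i _ ↦ sq_mul_inv_rrGap_div_two_le (hε i)
  have hvar_pos : 0 < ∑ i, (ε i ^ 2 * (rrGap (ε i))⁻¹ / 2) ^ 2 :=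
    Finset.sum_pos (fun i _ ↦ have := hg i; have := hε0 i; by positivity) Finset.univ_nonempty
  refine hbound.trans (mul_le_mul_of_nonneg_left (exp_le_exp.mpr ?_) zero_le_two)
  rw [neg_div, neg_div, neg_le_neg_iff]
  exact div_le_div_of_nonneg_left (sq_nonneg r) (by positivity) (by linarith)

theorem rrEstimator_accuracy {ι : Type*} [Fintype ι] [Nonempty ι] {ε : ι → ℝ}
    (hε : ∀ i, ε i ∈ Set.Ioc 0 1) (hα : 2 ≤ Fintype.card α) {β : ℝ}
    (hβ : β ∈ Set.Ioo 0 1) (P : Measure α) [IsProbabilityMeasure P] :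
    ENNReal.ofReal (1 - β) ≤ (Measure.pi fun i ↦ rrKernel (ε i) ∘ₘ P)
      {ω | ∀ v, |rrEstimator ε ω v - P.real {v}|
        ≤ min (6 * sqrt (log (Fintype.card α / β) / ∑ i, ε i ^ 2)) 1} := by
  set S := ∑ i, ε i ^ 2
  set d : ℝ := (Fintype.card α : ℝ)
  set L := log (d / β)
  -- With this `t` the Hoeffding exponent `(S t)² / (18 S)` is `2 L`, so each tail is `(β / d)²`.
  set t := 6 * sqrt (L / S)
  set ν := Measure.pi fun i ↦ rrKernel (ε i) ∘ₘ P
  have hS : 0 < S := Finset.sum_pos (fun i _ ↦ pow_pos (hε i).1 2) Finset.univ_nonempty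
  have hd : (2 : ℝ) ≤ d := by simp only [d]; exact_mod_cast hα
  have hβd : 0 < d / β := by have := hβ.1; positivity
  have hbad := compl_setOf_abs_rrEstimator_sub_le_subset (q := fun v ↦ P.real {v}) hS
    (fun v ↦ ⟨measureReal_nonneg, measureReal_le_one⟩) t
  have htail : ∀ v,
      ν.real {ω | S * t ≤ |∑ i, ε i ^ 2 * rrDebias (ε i) (ω i v) - S * P.real {v}|}
        ≤ 2 * (β / d) ^ 2 := by
    intro v
    refine (rrDebias_sum_deviation_le hε P v (by positivity)).trans (le_of_eq ?_)
    have hexp : (S * t) ^ 2 / (18 * S) = 2 * L := by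
      rw [mul_pow, mul_pow, sq_sqrt (div_nonneg (log_nonneg ?_) hS.le)]
      · field_simp; ring
      · rw [le_div_iff₀ hβ.1]; linarith [hβ.2]
    change 2 * exp (-(S * t) ^ 2 / (18 * S)) = _
    rw [neg_div, hexp, exp_neg, show exp (2 * L) = (d / β) ^ 2 by
      rw [two_mul, exp_add, exp_log hβd, sq], ← inv_pow, inv_div]
  have hprob : ν.real {ω | ∀ v, |rrEstimator ε ω v - P.real {v}| ≤ min t 1}ᶜ ≤ β :=
    calc _ ≤ _ := measureReal_mono hbad
      _ ≤ _ := measureReal_iUnion_fintype_le _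
      _ ≤ ∑ _v : α, 2 * (β / d) ^ 2 := Finset.sum_le_sum fun v _ ↦ htail v
      _ = 2 * β / d * β := by
        simp only [Finset.sum_const, Finset.card_univ, nsmul_eq_mul]
        change d * _ = _
        field_simp
      _ ≤ 1 * β := by
        gcongr
        · exact hβ.1.le
        · rw [div_le_one (by linarith)]; linarith [hβ.2]
      _ = β := one_mul β
  rw [← ofReal_measureReal]
  refine ENNReal.ofReal_le_ofReal ?_
  rw [← compl_compl {ω | _}, probReal_compl_eq_one_sub (Set.to_countable _).measurableSet]
  linarith

end RandomizedResponse

/-- Heterogeneous locally private distribution learning in `ℓ∞`: there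
is a universal constant `c > 0` such that for every `d, n, ε₁,…,εₙ ∈ (0,1]` and
`β ∈ (0,1)` there exist `εᵢ`-LDP Markov kernels `Cᵢ : [d] → Yᵢ` and a measurable
estimator `p̂` such that for every distribution `P` on `[d]`, with `Xᵢ` i.i.d. `P` and
`Yᵢ ∼ Cᵢ(Xᵢ)` (so that `Y ∼ ⊗ᵢ (Cᵢ)∗P`), with probability at least `1 − β`,
`max_v |p̂(Y)_v − P({v})| ≤ min(c sqrt(log(d/β)/∑ᵢ εᵢ²), 1)`. -/
theorem stmt19 :
    ∃ c : ℝ, 0 < c ∧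
      ∀ (d : ℕ), 1 ≤ d → ∀ (n : ℕ), 1 ≤ n →
      ∀ ε : Fin n → ℝ, (∀ i, ε i ∈ Set.Ioc (0 : ℝ) 1) →
      ∀ β : ℝ, β ∈ Set.Ioo (0 : ℝ) 1 →
      ∃ (Y : Fin n → Type) (mY : ∀ i, MeasurableSpace (Y i))
        (C : ∀ i, ProbabilityTheory.Kernel (Fin d) (Y i))
        (estim : (∀ i, Y i) → Fin d → ℝ),
        (∀ i, IsMarkovKernel (C i)) ∧
        (∀ i, IsLDP (C i) (ε i)) ∧
        Measurable estim ∧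
        ∀ P : Measure (Fin d), IsProbabilityMeasure P →
          ENNReal.ofReal (1 - β) ≤
            (Measure.pi fun i => Measure.bind P (fun x => C i x))
              {y | ∀ v : Fin d,
                |estim y v - (P {v}).toReal|
                  ≤ min (c * Real.sqrt (Real.log (d / β) / ∑ i, (ε i) ^ 2)) 1} := by
  refine ⟨6, by norm_num, fun d hd n hn ε hε β hβ ↦ ?_⟩
  obtain rfl | hd := hd.eq_or_lt
  · refine ⟨_, _, fun i ↦ rrKernel (ε i), fun _ _ ↦ 1, fun i ↦ inferInstance,
      fun i ↦ isLDP_rrKernel (hε i).1.le, measurable_const, fun P _ ↦ ?_⟩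
    have hP : ∀ v : Fin 1, (P {v}).toReal = 1 := fun v ↦ by
      rw [Subsingleton.eq_univ_of_nonempty (Set.singleton_nonempty v)]; simp
    have h0 : (0 : ℝ) ≤ min (6 * √(log ((1 : ℕ) / β) / ∑ i, ε i ^ 2)) 1 := by positivity
    simp only [hP, sub_self, abs_zero, h0, implies_true, Set.ofPred_true, measure_univ]
    exact ENNReal.ofReal_le_one.mpr (by linarith [hβ.1])
  · have : Nonempty (Fin n) := ⟨⟨0, hn⟩⟩
    refine ⟨_, _, fun i ↦ rrKernel (ε i), rrEstimator ε, fun i ↦ inferInstance,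
      fun i ↦ isLDP_rrKernel (hε i).1.le, measurable_of_countable _, fun P _ ↦ ?_⟩
    have h := rrEstimator_accuracy hε (by simpa using hd.nat_succ_le) hβ P
    rwa [Fintype.card_fin] at h
end
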